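/- arXiv:1507.00447 — 6 statements merged into one kernel-verified Lean document; each statement's English description precedes it below -/
import Mathlib

section
/- Let S ⊆ {0,1}^d, let n be a positive integer, and let c ∈ ℤ^{d×n} be defined by c_{i,j} = -(d+1)^{j-1} for all i,j. If x, y ∈ S^n are such that the vulnerability vector (|x̄^1|,...,|x̄^n|) of x is lexicographically smaller than that of y (i.e., the last index r where they differ satisfies |x̄^r| < |ȳ^r|), then c·x̄ > c·ȳ (where the products are entrywise inner products of matrices). -/
/-- Two `d × n` matrices are equivalent if each row of one is a permutation
of the corresponding row of the other. -/
def Eqv {d n : ℕ} (x y : Fin d → Fin n → ℕ) : Prop :=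
  ∀ i : Fin d, ∃ σ : Equiv.Perm (Fin n), ∀ j, x i j = y i (σ j)

/-- `xb` is the shift of `x`: equivalent to `x` and each row nonincreasing. -/
def IsShift {d n : ℕ} (xb x : Fin d → Fin n → ℕ) : Prop :=
  Eqv xb x ∧ ∀ i : Fin d, ∀ j k : Fin n, j ≤ k → xb i k ≤ xb i j

/-!
Weighting column `j` by `(d + 1) ^ j` turns the vulnerability vector into the base-`(d + 1)`
number whose digits are the column sums, and these lie in `[0, d]`. Comparing such numbers is
lexicographic from the most significant digit: the digits below position `r` contribute at most
`(d + 1) ^ r - 1`, less than one unit at position `r`. Since `c` is minus these weights, the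
comparison reverses.
-/

open Finset

theorem Fin.sum_Iio_pow_mul_lt_pow {n d : ℕ} (a : Fin n → ℕ) (ha : ∀ j, a j ≤ d) (r : Fin n) :
    ∑ j ∈ Iio r, (d + 1) ^ (j : ℕ) * a j < (d + 1) ^ (r : ℕ) :=
  calc ∑ j ∈ Iio r, (d + 1) ^ (j : ℕ) * a j
      ≤ ∑ j ∈ Iio r, (d + 1) ^ (j : ℕ) * d := sum_le_sum fun j _ => Nat.mul_le_mul_left _ (ha j)
    _ = (∑ m ∈ range r, (d + 1) ^ m) * d := by
      rw [← sum_mul, ← Nat.Iio_eq_range, ← Fin.map_valEmbedding_Iio, sum_map]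
      rfl
    _ < (d + 1) ^ (r : ℕ) := by rw [← geom_sum_mul_add d r]; exact Nat.lt_add_one _

theorem Fin.sum_univ_eq_sum_Iio_add_add_sum_Ioi {M : Type*} [AddCommMonoid M] {n : ℕ}
    (g : Fin n → M) (r : Fin n) :
    ∑ j, g j = ∑ j ∈ Iio r, g j + g r + ∑ j ∈ Ioi r, g j := by
  rw [sum_Iio_add_eq_sum_Iic, ← sum_filter_add_sum_filter_not univ (· ≤ r)]
  congr 1 <;> congr 1 <;> ext j <;> simp

theorem Fin.sum_pow_mul_lt_sum_pow_mul_of_lex {n d : ℕ} {a b : Fin n → ℕ} (ha : ∀ j, a j ≤ d)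
    (r : Fin n) (hr : a r < b r) (hgt : ∀ j, r < j → a j = b j) :
    ∑ j : Fin n, (d + 1) ^ (j : ℕ) * a j < ∑ j : Fin n, (d + 1) ^ (j : ℕ) * b j := by
  rw [Fin.sum_univ_eq_sum_Iio_add_add_sum_Ioi _ r, Fin.sum_univ_eq_sum_Iio_add_add_sum_Ioi _ r,
    sum_congr (s₁ := Ioi r) rfl fun j hj => by rw [hgt j (mem_Ioi.mp hj)]]
  refine Nat.add_lt_add_right ?_ _
  calc ∑ j ∈ Iio r, (d + 1) ^ (j : ℕ) * a j + (d + 1) ^ (r : ℕ) * a r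
      < (d + 1) ^ (r : ℕ) + (d + 1) ^ (r : ℕ) * a r :=
        Nat.add_lt_add_right (sum_Iio_pow_mul_lt_pow a ha r) _
    _ = (d + 1) ^ (r : ℕ) * (a r + 1) := by ring
    _ ≤ (d + 1) ^ (r : ℕ) * b r := Nat.mul_le_mul_left _ hr
    _ ≤ ∑ j ∈ Iio r, (d + 1) ^ (j : ℕ) * b j + (d + 1) ^ (r : ℕ) * b r := Nat.le_add_left _ _

theorem Eqv.le_of_forall_le {d n m : ℕ} {x y : Fin d → Fin n → ℕ} (h : Eqv x y)
    (hy : ∀ i j, y i j ≤ m) (i : Fin d) (j : Fin n) : x i j ≤ m := by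
  obtain ⟨σ, hσ⟩ := h i
  exact hσ j ▸ hy i (σ j)

theorem stmt0_general (d n : ℕ) (S : Set (Fin d → ℕ))
    (hS : ∀ z ∈ S, ∀ i, z i ≤ 1)
    (c : Fin d → Fin n → ℤ) (hc : ∀ i j, c i j = -((d : ℤ) + 1) ^ (j : ℕ))
    (x xb yb : Fin d → Fin n → ℕ)
    (hx : ∀ j, (fun i => x i j) ∈ S)
    (hxb : IsShift xb x)
    (r : Fin n) (hr1 : (∑ i, xb i r) < ∑ i, yb i r)
    (hr2 : ∀ j, r < j → (∑ i, xb i j) = ∑ i, yb i j) :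
    (∑ i, ∑ j, c i j * (yb i j : ℤ)) < ∑ i, ∑ j, c i j * (xb i j : ℤ) := by
  have hcol : ∀ j, ∑ i, xb i j ≤ d := fun j => by
    simpa using sum_le_card_nsmul univ (xb · j) 1 fun i _ =>
      hxb.1.le_of_forall_le (fun i j => hS _ (hx j) i) i j
  have hweight : ∀ z : Fin d → Fin n → ℕ,
      ∑ i, ∑ j, c i j * (z i j : ℤ) = -((∑ j : Fin n, (d + 1) ^ (j : ℕ) * ∑ i, z i j : ℕ) : ℤ) := by
    intro z
    simp only [hc, sum_comm (γ := Fin d), mul_sum]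
    push_cast
    simp [neg_mul]
  rw [hweight, hweight, neg_lt_neg_iff, Nat.cast_lt]
  exact Fin.sum_pow_mul_lt_sum_pow_mul_of_lex hcol r hr1 hr2

theorem stmt0 (d n : ℕ) (hn : 0 < n) (S : Set (Fin d → ℕ))
    (hS : ∀ z ∈ S, ∀ i, z i ≤ 1)
    (c : Fin d → Fin n → ℤ) (hc : ∀ i j, c i j = -((d : ℤ) + 1) ^ (j : ℕ))
    (x y xb yb : Fin d → Fin n → ℕ)
    (hx : ∀ j, (fun i => x i j) ∈ S) (hy : ∀ j, (fun i => y i j) ∈ S)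
    (hxb : IsShift xb x) (hyb : IsShift yb y)
    (r : Fin n) (hr1 : (∑ i, xb i r) < ∑ i, yb i r)
    (hr2 : ∀ j, r < j → (∑ i, xb i j) = ∑ i, yb i j) :
    (∑ i, ∑ j, c i j * (yb i j : ℤ)) < ∑ i, ∑ j, c i j * (xb i j : ℤ) :=
  stmt0_general d n S hS c hc x xb yb hx hxb r hr1 hr2
end

section
/- Let S ⊆ {0,1}^d and n a positive integer. Then [S^n] = ∨_n(↑_n S), i.e., a 0-1 matrix x ∈ {0,1}^{d×n} is row-permutation-equivalent to some matrix in S^n if and only if x can be written as a sum x = Σ_{k=1}^n x_k of 0-1 matrices x_k ∈ {0,1}^{d×n} with pairwise disjoint supports such that for each k the column sum Σ_{j=1}^n x_k^j lies in S. -/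
open Finset

section ZeroOne

variable {ι : Type*} [Fintype ι]

lemma sum_eq_card_eq_one {f : ι → ℕ} (hf : ∀ i, f i ≤ 1) :
    ∑ i, f i = Fintype.card {i // f i = 1} := by
  classical
  rw [Fintype.card_subtype, card_filter]
  refine sum_congr rfl fun i _ => ?_
  have := hf i
  split_ifs <;> omega

lemma exists_perm_eq_comp_of_sum_eq {f g : ι → ℕ} (hf : ∀ i, f i ≤ 1) (hg : ∀ i, g i ≤ 1)
    (hsum : ∑ i, f i = ∑ i, g i) : ∃ σ : Equiv.Perm ι, ∀ i, f i = g (σ i) := by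
  classical
  have hcard : Fintype.card {i // f i = 1} = Fintype.card {i // g i = 1} := by
    rw [← sum_eq_card_eq_one hf, ← sum_eq_card_eq_one hg, hsum]
  let e := Fintype.equivOfCardEq hcard
  refine ⟨e.extendSubtype, fun i => ?_⟩
  have := hf i
  have := hg (e.extendSubtype i)
  by_cases hi : f i = 1
  · have := e.extendSubtype_mem i hi
    omega
  · have := e.extendSubtype_not_mem i hi
    omega

end ZeroOne

section RowSplit

variable {ι κ : Type*} [DecidableEq κ]

def rowSplit (x : ι → κ → ℕ) (σ : ι → Equiv.Perm κ) (k : κ) (i : ι) (j : κ) : ℕ :=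
  if σ i j = k then x i j else 0

variable (x : ι → κ → ℕ) (σ : ι → Equiv.Perm κ)

lemma rowSplit_le_one (hx : ∀ i j, x i j ≤ 1) (k : κ) (i : ι) (j : κ) :
    rowSplit x σ k i j ≤ 1 := by
  unfold rowSplit
  split_ifs
  exacts [hx i j, zero_le_one]

lemma rowSplit_disjoint {k l : κ} (hkl : k ≠ l) (i : ι) (j : κ) :
    rowSplit x σ k i j = 0 ∨ rowSplit x σ l i j = 0 := by
  unfold rowSplit
  by_cases h : σ i j = k
  · exact .inr (if_neg (h ▸ hkl))
  · exact .inl (if_neg h)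

lemma sum_rowSplit [Fintype κ] (i : ι) (j : κ) : ∑ k, rowSplit x σ k i j = x i j := by
  simp [rowSplit]

lemma sum_rowSplit_eq_of_eq_comp [Fintype κ] {y : ι → κ → ℕ} (hxy : ∀ i j, x i j = y i (σ i j))
    (k : κ) (i : ι) : ∑ j, rowSplit x σ k i j = y i k := by
  calc ∑ j, rowSplit x σ k i j = ∑ j, if σ i j = k then y i (σ i j) else 0 := by
        simp only [rowSplit, hxy]
    _ = ∑ j', if j' = k then y i j' else 0 := Fintype.sum_equiv (σ i) _ _ fun _ => rfl
    _ = y i k := by simp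

end RowSplit

theorem stmt1_general (d n : ℕ) (S : Set (Fin d → ℕ))
    (hS : ∀ z ∈ S, ∀ i, z i ≤ 1)
    (x : Fin d → Fin n → ℕ) (hx01 : ∀ i j, x i j ≤ 1) :
    (∃ y : Fin d → Fin n → ℕ, (∀ j, (fun i => y i j) ∈ S) ∧ Eqv x y) ↔
    (∃ xs : Fin n → Fin d → Fin n → ℕ,
      (∀ k i j, xs k i j ≤ 1) ∧
      (∀ k, (fun i => ∑ j, xs k i j) ∈ S) ∧
      (∀ k l, k ≠ l → ∀ i j, xs k i j = 0 ∨ xs l i j = 0) ∧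
      (∀ i j, x i j = ∑ k, xs k i j)) := by
  constructor
  · rintro ⟨y, hyS, hxy⟩
    choose σ hσ using hxy
    refine ⟨rowSplit x σ, rowSplit_le_one x σ hx01, fun k => ?_,
      fun k l hkl => rowSplit_disjoint x σ hkl, fun i j => (sum_rowSplit x σ i j).symm⟩
    simpa only [sum_rowSplit_eq_of_eq_comp x σ hσ] using hyS k
  · rintro ⟨xs, -, hxsS, -, hxsum⟩
    refine ⟨fun i k => ∑ j, xs k i j, hxsS, fun i => ?_⟩
    refine exists_perm_eq_comp_of_sum_eq (hx01 i) (fun k => hS _ (hxsS k) i) ?_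
    simp only [hxsum]
    exact sum_comm

/-- `[Sⁿ] = ∨ₙ ↑ₙ S`: a 0-1 matrix is row-permutation-equivalent to a matrix with all
columns in `S` iff it is a sum of `n` support-disjoint 0-1 matrices whose column sums lie
in `S`. -/
theorem stmt1 (d n : ℕ) (hn : 0 < n) (S : Set (Fin d → ℕ))
    (hS : ∀ z ∈ S, ∀ i, z i ≤ 1)
    (x : Fin d → Fin n → ℕ) (hx01 : ∀ i j, x i j ≤ 1) :
    (∃ y : Fin d → Fin n → ℕ, (∀ j, (fun i => y i j) ∈ S) ∧ Eqv x y) ↔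
    (∃ xs : Fin n → Fin d → Fin n → ℕ,
      (∀ k i j, xs k i j ≤ 1) ∧
      (∀ k, (fun i => ∑ j, xs k i j) ∈ S) ∧
      (∀ k l, k ≠ l → ∀ i j, xs k i j = 0 ∨ xs l i j = 0) ∧
      (∀ i j, x i j = ∑ k, xs k i j)) :=
  stmt1_general d n S hS x hx01
end

section
/- If S ⊆ {0,1}^d is the set of indicators of independent sets of a matroid of rank r, then the matroid [S^n] = ∨_n(↑_n S) on ground set [d]×[n] has rank exactly n·r. -/
def IsMatroid {E : Type*} [Fintype E] [DecidableEq E] (S : Set (E → ℕ)) : Prop :=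
  (∀ z ∈ S, ∀ i, z i ≤ 1) ∧
  ((fun _ => 0) ∈ S) ∧
  (∀ x ∈ S, ∀ y : E → ℕ, (∀ i, y i ≤ x i) → y ∈ S) ∧
  (∀ x ∈ S, ∀ y ∈ S, (∑ i, y i) < (∑ i, x i) →
    ∃ i, x i = 1 ∧ y i = 0 ∧ Function.update y i 1 ∈ S)

/-- `[Sⁿ]`: the set of matrices equivalent to some matrix all of whose columns lie in `S`. -/
def SBracket {d : ℕ} (n : ℕ) (S : Set (Fin d → ℕ)) : Set (Fin d → Fin n → ℕ) :=
  {x | ∃ y : Fin d → Fin n → ℕ, (∀ j, (fun i => y i j) ∈ S) ∧ Eqv x y}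

/-! Both bounds are immediate: `n` copies of a largest element of `S` give an element of `[Sⁿ]` of size `n * r`,
and since row permutations preserve the total sum, every element of `[Sⁿ]` has the size of a matrix
whose `n` columns each have size at most `r`. -/

theorem Eqv.sum_eq {d n : ℕ} {x y : Fin d → Fin n → ℕ} (h : Eqv x y) :
    ∑ i, ∑ j, x i j = ∑ i, ∑ j, y i j := by
  refine Finset.sum_congr rfl fun i _ => ?_
  obtain ⟨σ, hσ⟩ := h i
  simp only [hσ]
  exact Equiv.sum_comp σ (y i)

theorem Eqv.refl {d n : ℕ} (x : Fin d → Fin n → ℕ) : Eqv x x :=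
  fun _ => ⟨Equiv.refl _, fun _ => rfl⟩

theorem const_mem_sBracket {d : ℕ} (n : ℕ) {S : Set (Fin d → ℕ)} {z : Fin d → ℕ} (hz : z ∈ S) :
    (fun i _ => z i : Fin d → Fin n → ℕ) ∈ SBracket n S :=
  ⟨_, fun _ => hz, Eqv.refl _⟩

theorem sum_le_of_mem_sBracket {d n : ℕ} {S : Set (Fin d → ℕ)} {r : ℕ}
    (hr : ∀ z ∈ S, ∑ i, z i ≤ r) {x : Fin d → Fin n → ℕ} (hx : x ∈ SBracket n S) :
    ∑ i, ∑ j, x i j ≤ n * r := by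
  obtain ⟨y, hy, hxy⟩ := hx
  calc ∑ i, ∑ j, x i j = ∑ j, ∑ i, y i j := by rw [hxy.sum_eq, Finset.sum_comm]
    _ ≤ ∑ _j : Fin n, r := Finset.sum_le_sum fun j _ => hr _ (hy j)
    _ = n * r := by simp

theorem stmt4_general (d n : ℕ) (S : Set (Fin d → ℕ))
    (r : ℕ) (hr1 : ∃ z ∈ S, (∑ i, z i) = r) (hr2 : ∀ z ∈ S, (∑ i, z i) ≤ r) :
    (∃ x ∈ SBracket n S, (∑ i, ∑ j, x i j) = n * r) ∧
      ∀ x ∈ SBracket n S, (∑ i, ∑ j, x i j) ≤ n * r := by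
  obtain ⟨z, hz, hzr⟩ := hr1
  refine ⟨⟨_, const_mem_sBracket n hz, ?_⟩, fun x hx => sum_le_of_mem_sBracket hr2 hx⟩
  simp [← Finset.mul_sum, hzr]

/-- If `S` is a matroid of rank `r`, then the matroid `[Sⁿ]` has rank `n * r`. -/
theorem stmt4 (d n : ℕ) (hn : 0 < n) (S : Set (Fin d → ℕ)) (hM : IsMatroid S)
    (r : ℕ) (hr1 : ∃ z ∈ S, (∑ i, z i) = r) (hr2 : ∀ z ∈ S, (∑ i, z i) ≤ r) :
    (∃ x ∈ SBracket n S, (∑ i, ∑ j, x i j) = n * r) ∧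
      ∀ x ∈ SBracket n S, (∑ i, ∑ j, x i j) ≤ n * r :=
  stmt4_general d n S r hr1 hr2
end

section
/- Suppose x is a maximizer of c·x over [S^n] (the shuffling problem with profit matrix c̄, where c̄ has nonincreasing rows), and y ∈ S^n satisfies x ∼ y. Then y is an optimal solution of the shifted problem max{c̄·z̄ : z ∈ S^n}: for every z ∈ S^n one has c̄·ȳ ≥ c̄·z̄. -/
namespace Eqv

variable {d n : ℕ} {x y w : Fin d → Fin n → ℕ}

theorem symm (h : Eqv x y) : Eqv y x := fun i =>
  let ⟨σ, hσ⟩ := h i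
  ⟨σ.symm, fun j => by rw [hσ, Equiv.apply_symm_apply]⟩

theorem trans (hxy : Eqv x y) (hyw : Eqv y w) : Eqv x w := fun i =>
  let ⟨σ, hσ⟩ := hxy i
  let ⟨τ, hτ⟩ := hyw i
  ⟨σ.trans τ, fun j => by rw [hσ, hτ, Equiv.trans_apply]⟩

end Eqv

def profit {d n : ℕ} (c : Fin d → Fin n → ℤ) (x : Fin d → Fin n → ℕ) : ℤ :=
  ∑ i, ∑ j, c i j * (x i j : ℤ)

theorem profit_le_of_eqv_of_antitone {d n : ℕ} {c : Fin d → Fin n → ℤ}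
    {x w : Fin d → Fin n → ℕ} (hc : ∀ i, Antitone (c i)) (hxw : Eqv x w)
    (hw : ∀ i, Antitone (w i)) : profit c x ≤ profit c w := by
  refine Finset.sum_le_sum fun i _ => ?_
  obtain ⟨σ, hσ⟩ := hxw i
  have hmono : Monovary (c i) (fun j => (w i j : ℤ)) :=
    (hc i).monovary (Nat.mono_cast.comp_antitone (hw i))
  simpa only [hσ] using hmono.sum_mul_comp_perm_le_sum_mul (σ := σ)

theorem stmt6_general (d n : ℕ) (S : Set (Fin d → ℕ))
    (cb : Fin d → Fin n → ℤ) (hcb : ∀ i : Fin d, ∀ j k : Fin n, j ≤ k → cb i k ≤ cb i j)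
    (x : Fin d → Fin n → ℕ)
    (hxopt : ∀ x' : Fin d → Fin n → ℕ,
      (∃ u : Fin d → Fin n → ℕ, (∀ j, (fun i => u i j) ∈ S) ∧ Eqv x' u) →
      (∑ i, ∑ j, cb i j * (x' i j : ℤ)) ≤ ∑ i, ∑ j, cb i j * (x i j : ℤ))
    (y : Fin d → Fin n → ℕ) (hxy : Eqv x y)
    (yb : Fin d → Fin n → ℕ) (hyb : IsShift yb y)
    (z : Fin d → Fin n → ℕ) (hz : ∀ j, (fun i => z i j) ∈ S)
    (zb : Fin d → Fin n → ℕ) (hzb : IsShift zb z) :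
    (∑ i, ∑ j, cb i j * (zb i j : ℤ)) ≤ ∑ i, ∑ j, cb i j * (yb i j : ℤ) := by
  have hz_le_x : profit cb zb ≤ profit cb x := hxopt zb ⟨z, hz, hzb.1⟩
  have hx_le_y : profit cb x ≤ profit cb yb :=
    profit_le_of_eqv_of_antitone hcb (hxy.trans hyb.1.symm) hyb.2
  exact hz_le_x.trans hx_le_y

/-- If `x` maximizes `c̄·x` over `[Sⁿ]` and `y ∈ Sⁿ` satisfies `x ∼ y`, then `y` is optimal
for the shifted problem: `c̄·ȳ ≥ c̄·z̄` for every `z ∈ Sⁿ`. -/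
theorem stmt6 (d n : ℕ) (S : Set (Fin d → ℕ)) (hS : ∀ z ∈ S, ∀ i, z i ≤ 1)
    (cb : Fin d → Fin n → ℤ) (hcb : ∀ i : Fin d, ∀ j k : Fin n, j ≤ k → cb i k ≤ cb i j)
    (x : Fin d → Fin n → ℕ)
    (hxmem : ∃ u : Fin d → Fin n → ℕ, (∀ j, (fun i => u i j) ∈ S) ∧ Eqv x u)
    (hxopt : ∀ x' : Fin d → Fin n → ℕ,
      (∃ u : Fin d → Fin n → ℕ, (∀ j, (fun i => u i j) ∈ S) ∧ Eqv x' u) →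
      (∑ i, ∑ j, cb i j * (x' i j : ℤ)) ≤ ∑ i, ∑ j, cb i j * (x i j : ℤ))
    (y : Fin d → Fin n → ℕ) (hy : ∀ j, (fun i => y i j) ∈ S) (hxy : Eqv x y)
    (yb : Fin d → Fin n → ℕ) (hyb : IsShift yb y)
    (z : Fin d → Fin n → ℕ) (hz : ∀ j, (fun i => z i j) ∈ S)
    (zb : Fin d → Fin n → ℕ) (hzb : IsShift zb z) :
    (∑ i, ∑ j, cb i j * (zb i j : ℤ)) ≤ ∑ i, ∑ j, cb i j * (yb i j : ℤ) :=
  stmt6_general d n S cb hcb x hxopt y hxy yb hyb z hz zb hzb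
end

section
/- If S ⊆ {0,1}^d is a strongly base orderable matroid, then ↑_n S ⊆ {0,1}^{d×n} is also a strongly base orderable matroid. -/
/-- `z` is a basis of the matroid `S`: an inclusionwise-maximal member. -/
def IsBaseV {E : Type*} (S : Set (E → ℕ)) (z : E → ℕ) : Prop :=
  z ∈ S ∧ ∀ w ∈ S, (∀ i, z i ≤ w i) → w = z

/-- The 0-1 indicator vector of a subset of the ground set. -/
noncomputable def indFun {E : Type*} (A : Set E) : E → ℕ := A.indicator 1

/-- `S` is strongly base orderable: for every pair of bases (given by their supports)
there is a bijection `π` between the supports such that for every subset `I` of the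
first support, `π(I) ∪ (B₁ \ I)` is again (the support of) a basis. -/
def IsSBO {E : Type*} (S : Set (E → ℕ)) : Prop :=
  ∀ z w : E → ℕ, IsBaseV S z → IsBaseV S w →
    ∃ π : E → E, Set.BijOn π {i | z i = 1} {i | w i = 1} ∧
      ∀ I ⊆ {i | z i = 1}, IsBaseV S (indFun (π '' I ∪ ({i | z i = 1} \ I)))

def Lift (d n : ℕ) (S : Set (Fin d → ℕ)) : Set (Fin d × Fin n → ℕ) :=
  {x | (fun i => ∑ j, x (i, j)) ∈ S}

/-!
A base of `↑ₙ S` has at most one `1` in each row, so `Prod.fst` is injective on its support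
and maps it onto the support of its column sum, which is a base of `S`. Given bases `z`, `w`
of `↑ₙ S` and a strong exchange bijection `π₀` between their column sums, send
`(i, j) ∈ supp z` to the unique entry of `w` in row `π₀ i`. For `I ⊆ supp z` with projection
`I₀`, the exchanged set `π(I) ∪ (supp z \ I)` projects onto `π₀(I₀) ∪ (B \ I₀)`, where `B` is
the projection of `supp z`, and this is a base of `S`. All bases of `S` have the same size,
so the union is disjoint; hence the projection is injective on the exchanged set, whose
column sum is therefore that base.
-/

open Set Function

section Matroid

variable {E : Type*} [Fintype E] [DecidableEq E] {S : Set (E → ℕ)}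

namespace IsMatroid

lemma le_one (hM : IsMatroid S) {z : E → ℕ} (hz : z ∈ S) (i : E) : z i ≤ 1 :=
  hM.1 z hz i

lemma mem_of_le (hM : IsMatroid S) {x y : E → ℕ} (hx : x ∈ S) (hyx : ∀ i, y i ≤ x i) :
    y ∈ S :=
  hM.2.2.1 x hx y hyx

lemma exists_augment (hM : IsMatroid S) {x y : E → ℕ} (hx : x ∈ S) (hy : y ∈ S)
    (h : ∑ i, y i < ∑ i, x i) : ∃ i, x i = 1 ∧ y i = 0 ∧ update y i 1 ∈ S :=
  hM.2.2.2 x hx y hy h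

lemma sum_le_of_isBaseV (hM : IsMatroid S) {z w : E → ℕ} (hz : z ∈ S) (hw : IsBaseV S w) :
    ∑ i, z i ≤ ∑ i, w i := by
  by_contra! h
  obtain ⟨i, -, hwi, hup⟩ := hM.exists_augment hz hw.1 h
  have := congrFun (hw.2 _ hup (le_update_self_iff.2 (by simp [hwi]))) i
  simp [hwi] at this

lemma sum_eq_of_isBaseV (hM : IsMatroid S) {z w : E → ℕ} (hz : IsBaseV S z)
    (hw : IsBaseV S w) : ∑ i, z i = ∑ i, w i :=
  (hM.sum_le_of_isBaseV hz.1 hw).antisymm (hM.sum_le_of_isBaseV hw.1 hz)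

end IsMatroid

end Matroid

section IndFun

variable {E : Type*}

lemma setOf_indFun_eq_one (A : Set E) : {i | indFun A i = 1} = A := by
  ext i
  by_cases hi : i ∈ A <;> simp [indFun, hi]

lemma indFun_setOf_eq_one {z : E → ℕ} (hz : ∀ i, z i ≤ 1) : indFun {i | z i = 1} = z := by
  funext i
  have := hz i
  interval_cases hzi : z i <;> simp [indFun, hzi]

lemma sum_indFun [Fintype E] (A : Set E) : ∑ i, indFun A i = A.ncard := by
  classical
  simp [indFun, indicator_apply, Finset.sum_boole, ncard_eq_toFinset_card']

end IndFun

lemma IsMatroid.disjoint_image_sdiff {E : Type*} [Fintype E] [DecidableEq E]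
    {S : Set (E → ℕ)} (hM : IsMatroid S) {B I : Set E} {π : E → E}
    (hB : IsBaseV S (indFun B)) (hπ : InjOn π B) (hI : I ⊆ B)
    (hexch : IsBaseV S (indFun (π '' I ∪ (B \ I)))) : Disjoint (π '' I) (B \ I) := by
  have hcard : (π '' I ∪ (B \ I)).ncard = I.ncard + (B \ I).ncard := by
    rw [← sum_indFun, hM.sum_eq_of_isBaseV hexch hB, sum_indFun,
      ← ncard_sdiff_add_ncard_of_subset hI, add_comm]
  have := ncard_union_add_ncard_inter (π '' I) (B \ I)
  rw [hcard, (hπ.mono hI).ncard_image] at this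
  rw [disjoint_iff_inter_eq_empty, ← ncard_eq_zero]
  omega

lemma Set.InjOn.union_of_disjoint_image {α β : Type*} {f : α → β} {s t : Set α}
    (hs : InjOn f s) (ht : InjOn f t) (h : Disjoint (f '' s) (f '' t)) : InjOn f (s ∪ t) :=
  (injOn_union h.of_image).2
    ⟨hs, ht, fun _ ha _ hb => h.ne_of_mem (mem_image_of_mem f ha) (mem_image_of_mem f hb)⟩

lemma isSBO_of_isEmpty {E : Type*} [IsEmpty E] (S : Set (E → ℕ)) : IsSBO S := by
  intro z w hz _
  refine ⟨id, ?_, fun _ _ => ?_⟩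
  · rw [eq_empty_of_isEmpty {i | z i = 1}, eq_empty_of_isEmpty {i | w i = 1}]
    exact bijOn_empty id
  · rwa [Subsingleton.elim (indFun _) z]

section ColSum

variable {α ι : Type*} [Fintype ι]

/-- The column sum `∑ⱼ xʲ` of the paper, for `x` with rows indexed by `α`. -/
def colSum (x : α × ι → ℕ) (i : α) : ℕ := ∑ j, x (i, j)

lemma colSum_zero : colSum (0 : α × ι → ℕ) = 0 :=
  funext fun _ => Finset.sum_const_zero

lemma le_colSum (x : α × ι → ℕ) (p : α × ι) : x p ≤ colSum x p.1 :=
  Finset.single_le_sum (f := fun j => x (p.1, j)) (fun _ _ => Nat.zero_le _)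
    (Finset.mem_univ p.2)

lemma colSum_update_of_colSum_eq_zero [DecidableEq α] [DecidableEq ι] {x : α × ι → ℕ}
    {i : α} (hx : colSum x i = 0) (j : ι) (c : ℕ) :
    colSum (update x (i, j) c) = update (colSum x) i c := by
  funext k
  rcases eq_or_ne k i with rfl | hk
  · rw [colSum, Finset.sum_eq_single j, update_self, update_self]
    · intro j' _ hj'
      rw [update_of_ne (by simpa using hj')]
      exact Nat.eq_zero_of_le_zero (hx ▸ le_colSum x (k, j'))
    · simp
  · simp only [colSum, update_of_ne hk]
    exact Finset.sum_congr rfl fun j' _ => update_of_ne (by simp [hk]) _ _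

lemma injOn_fst_setOf_eq_one {x : α × ι → ℕ} (hx : ∀ i, colSum x i ≤ 1) :
    InjOn Prod.fst {p | x p = 1} := by
  classical
  rintro ⟨i, j⟩ (hp : x (i, j) = 1) ⟨i', j'⟩ (hq : x (i', j') = 1) (rfl : i = i')
  by_contra hne
  have hjj : j ≠ j' := fun h => hne (h ▸ rfl)
  have : 2 ≤ colSum x i :=
    calc 2 = ∑ k ∈ {j, j'}, x (i, k) := by rw [Finset.sum_pair hjj, hp, hq]
      _ ≤ colSum x i := Finset.sum_le_sum_of_subset (Finset.subset_univ _)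
  linarith [hx i]

lemma colSum_indFun {A : Set (α × ι)} (hA : InjOn Prod.fst A) :
    colSum (indFun A) = indFun (Prod.fst '' A) := by
  funext i
  by_cases hi : i ∈ Prod.fst '' A
  · obtain ⟨⟨i, j⟩, hij, rfl⟩ := hi
    rw [colSum, Finset.sum_eq_single j]
    · simp [indFun, hij, mem_image_of_mem Prod.fst hij]
    · intro k _ hk
      exact indicator_of_notMem (fun (h : (i, k) ∈ A) => hk (congrArg Prod.snd (hA h hij rfl))) _
    · simp
  · unfold colSum indFun
    rw [indicator_of_notMem hi]
    exact Finset.sum_eq_zero fun j _ => indicator_of_notMem (fun h => hi ⟨_, h, rfl⟩) _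

lemma colSum_eq_indFun_image_fst {x : α × ι → ℕ} (hx : ∀ i, colSum x i ≤ 1) :
    colSum x = indFun (Prod.fst '' {p | x p = 1}) :=
  calc colSum x = colSum (indFun {p | x p = 1}) := by
        rw [indFun_setOf_eq_one fun p => (le_colSum x p).trans (hx p.1)]
    _ = indFun (Prod.fst '' {p | x p = 1}) := colSum_indFun (injOn_fst_setOf_eq_one hx)

lemma setOf_colSum_eq_one {x : α × ι → ℕ} (hx : ∀ i, colSum x i ≤ 1) :
    {i | colSum x i = 1} = Prod.fst '' {p | x p = 1} := by
  rw [colSum_eq_indFun_image_fst hx, setOf_indFun_eq_one]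

end ColSum

section Lift

variable {d n : ℕ} {S : Set (Fin d → ℕ)}

lemma mem_lift_iff {x : Fin d × Fin n → ℕ} : x ∈ Lift d n S ↔ colSum x ∈ S := Iff.rfl

lemma lift_isMatroid (hM : IsMatroid S) : IsMatroid (Lift d n S) := by
  refine ⟨fun x hx p => (le_colSum x p).trans (hM.le_one hx p.1), ?_,
    fun x hx y hyx => hM.mem_of_le hx fun i => Finset.sum_le_sum fun j _ => hyx (i, j), ?_⟩
  · change colSum 0 ∈ S
    rw [colSum_zero]
    exact hM.2.1
  · intro x hx y hy hlt
    rw [Fintype.sum_prod_type, Fintype.sum_prod_type] at hlt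
    obtain ⟨i, hxi, hyi, hup⟩ := hM.exists_augment hx hy hlt
    obtain ⟨⟨i, j⟩, hj, rfl⟩ : i ∈ Prod.fst '' {p | x p = 1} := by
      rw [← setOf_colSum_eq_one (hM.le_one hx)]
      exact hxi
    refine ⟨(i, j), hj, Nat.eq_zero_of_le_zero (hyi ▸ le_colSum y (i, j)), ?_⟩
    rw [mem_lift_iff, colSum_update_of_colSum_eq_zero hyi]
    exact hup

lemma isBaseV_lift_of_isBaseV_colSum {x : Fin d × Fin n → ℕ} (hx : IsBaseV S (colSum x)) :
    IsBaseV (Lift d n S) x := by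
  refine ⟨hx.1, fun v hv hxv => ?_⟩
  have hcol : colSum v = colSum x := hx.2 _ hv fun i => Finset.sum_le_sum fun j _ => hxv (i, j)
  have hsum : ∑ p, x p = ∑ p, v p := by
    simp only [Fintype.sum_prod_type]
    exact Finset.sum_congr rfl fun i _ => (congrFun hcol i).symm
  funext p
  exact ((Finset.sum_eq_sum_iff_of_le fun p _ => hxv p).1 hsum p (Finset.mem_univ p)).symm

lemma isBaseV_colSum_of_isBaseV_lift (hn : 0 < n) (hM : IsMatroid S)
    {x : Fin d × Fin n → ℕ} (hx : IsBaseV (Lift d n S) x) : IsBaseV S (colSum x) := by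
  refine ⟨hx.1, fun W hW hxW => ?_⟩
  by_contra hne
  obtain ⟨i, hi⟩ : ∃ i, colSum x i < W i := by
    by_contra! h
    exact hne (funext fun i => le_antisymm (h i) (hxW i))
  have hx0 : colSum x i = 0 := by linarith [hM.le_one hW i]
  set j₀ : Fin n := ⟨0, hn⟩
  have hx0' : x (i, j₀) = 0 := Nat.eq_zero_of_le_zero (hx0 ▸ le_colSum x (i, j₀))
  have hmem : update x (i, j₀) 1 ∈ Lift d n S := by
    rw [mem_lift_iff, colSum_update_of_colSum_eq_zero hx0]
    refine hM.mem_of_le hW fun k => ?_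
    rcases eq_or_ne k i with rfl | hk
    · rw [update_self]
      omega
    · rw [update_of_ne hk]
      exact hxW k
  have := congrFun (hx.2 _ hmem (le_update_self_iff.2 (by simp [hx0']))) (i, j₀)
  simp [hx0'] at this

lemma lift_isSBO (hM : IsMatroid S) (hSBO : IsSBO S) : IsSBO (Lift d n S) := by
  rcases isEmpty_or_nonempty (Fin d × Fin n) with _ | _
  · exact isSBO_of_isEmpty _
  have hn : 0 < n := (Classical.arbitrary (Fin d × Fin n)).2.pos
  intro z w hz hw
  set Bz := {p | z p = 1}
  set Bw := {p | w p = 1}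
  have hz1 : ∀ i, colSum z i ≤ 1 := hM.le_one hz.1
  have hw1 : ∀ i, colSum w i ≤ 1 := hM.le_one hw.1
  have hzinj : InjOn Prod.fst Bz := injOn_fst_setOf_eq_one hz1
  have hwinj : InjOn Prod.fst Bw := injOn_fst_setOf_eq_one hw1
  have hZ := isBaseV_colSum_of_isBaseV_lift hn hM hz
  have hW := isBaseV_colSum_of_isBaseV_lift hn hM hw
  rw [colSum_eq_indFun_image_fst hz1] at hZ
  rw [colSum_eq_indFun_image_fst hw1] at hW
  obtain ⟨π₀, hπ₀, hexch⟩ := hSBO _ _ hZ hW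
  simp only [setOf_indFun_eq_one] at hπ₀ hexch
  set π := invFunOn Prod.fst Bw ∘ π₀ ∘ Prod.fst
  have hπ : BijOn π Bz Bw :=
    (hwinj.bijOn_image.symm hwinj.bijOn_image.invOn_invFunOn.symm).comp
      (hπ₀.comp hzinj.bijOn_image)
  have hfst : ∀ p ∈ Bz, (π p).1 = π₀ p.1 := fun p hp =>
    invFunOn_eq (hπ₀.mapsTo (mem_image_of_mem Prod.fst hp))
  refine ⟨π, hπ, fun I hI => ?_⟩
  have himage : Prod.fst '' (π '' I) = π₀ '' (Prod.fst '' I) := by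
    rw [image_image, image_image]
    exact image_congr fun p hp => hfst p (hI hp)
  have hdiff : Prod.fst '' (Bz \ I) = Prod.fst '' Bz \ Prod.fst '' I := by
    rw [hzinj.image_sdiff, inter_eq_right.2 hI]
  have hbase := hexch _ (image_mono hI)
  have hdisj : Disjoint (Prod.fst '' (π '' I)) (Prod.fst '' (Bz \ I)) := by
    rw [himage, hdiff]
    exact hM.disjoint_image_sdiff hZ hπ₀.injOn (image_mono hI) hbase
  have hinj : InjOn Prod.fst (π '' I ∪ (Bz \ I)) :=
    (hwinj.mono (hπ.mapsTo.mono_left hI).image_subset).union_of_disjoint_image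
      (hzinj.mono sdiff_subset) hdisj
  apply isBaseV_lift_of_isBaseV_colSum
  rw [colSum_indFun hinj, image_union, himage, hdiff]
  exact hbase

end Lift

/-- If `S` is a strongly base orderable matroid, so is its `n`-lift `↑ₙ S`. -/
theorem stmt10 (d n : ℕ) (S : Set (Fin d → ℕ))
    (hM : IsMatroid S) (hSBO : IsSBO S) :
    IsMatroid (Lift d n S) ∧ IsSBO (Lift d n S) :=
  ⟨lift_isMatroid hM, lift_isSBO hM hSBO⟩
end

section
/- Let A be a totally unimodular integer matrix with d columns, b an integer vector, and S = {z ∈ {0,1}^d : Az = b}. Then [S^n] = {x ∈ {0,1}^{d×n} : A·(Σ_{j=1}^n x^j) = n·b}. -/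
/-!
Permuting entries within rows preserves the row-sum vector `w = ∑ⱼ xʲ`, and if all columns
of `y` lie in `S` then `A w = n b`. Conversely, for a 0-1 matrix `x` with `A w = n b` we have
`0 ≤ w ≤ n`, so Baum–Trotter splits `w` into `n` vectors of `S`; these form the columns of a
`y ∈ Sⁿ` with the same row sums as `x`, and two 0-1 rows with equal sums are permutations of
each other, since they have the same number of ones.
-/

/-- Equivalence of integer matrices: each row a permutation of the corresponding row. -/
def EqvZ {d n : ℕ} (x y : Fin d → Fin n → ℤ) : Prop :=
  ∀ i : Fin d, ∃ σ : Equiv.Perm (Fin n), ∀ j, x i j = y i (σ j)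

open Finset

theorem Equiv.Perm.exists_eq_comp_of_card_fiber_eq {α γ : Type*} [Fintype α] [DecidableEq γ]
    {f g : α → γ}
    (h : ∀ c, Fintype.card {a // f a = c} = Fintype.card {a // g a = c}) :
    ∃ σ : Equiv.Perm α, ∀ a, f a = g (σ a) :=
  ⟨Equiv.ofFiberEquiv fun c => Fintype.equivOfCardEq (h c),
    fun a => (Equiv.ofFiberEquiv_map _ a).symm⟩

section ZeroOne

variable {ι : Type*} [Fintype ι] {f g : ι → ℤ}

theorem sum_eq_card_of_zero_or_one (hf : ∀ j, f j = 0 ∨ f j = 1) :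
    ∑ j, f j = Fintype.card {j // f j = 1} := by
  rw [Fintype.card_subtype, card_filter, Nat.cast_sum]
  refine sum_congr rfl fun j _ => ?_
  rcases hf j with h | h <;> simp [h]

theorem card_fiber_eq_of_sum_eq_of_zero_or_one (hf : ∀ j, f j = 0 ∨ f j = 1)
    (hg : ∀ j, g j = 0 ∨ g j = 1) (hsum : ∑ j, f j = ∑ j, g j) (c : ℤ) :
    Fintype.card {j // f j = c} = Fintype.card {j // g j = c} := by
  have h1 : Fintype.card {j // f j = 1} = Fintype.card {j // g j = 1} := by
    exact_mod_cast (sum_eq_card_of_zero_or_one hf).symm.trans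
      (hsum.trans (sum_eq_card_of_zero_or_one hg))
  have zero_iff {h : ι → ℤ} (hh : ∀ j, h j = 0 ∨ h j = 1) (j : ι) : h j = 0 ↔ ¬h j = 1 := by
    rcases hh j with e | e <;> simp [e]
  by_cases hc0 : c = 0
  · subst hc0
    rw [Fintype.card_congr (Equiv.subtypeEquivRight (zero_iff hf)),
      Fintype.card_congr (Equiv.subtypeEquivRight (zero_iff hg)),
      Fintype.card_subtype_compl, Fintype.card_subtype_compl, h1]
  by_cases hc1 : c = 1
  · exact hc1 ▸ h1
  have empty {h : ι → ℤ} (hh : ∀ j, h j = 0 ∨ h j = 1) : Fintype.card {j // h j = c} = 0 :=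
    Fintype.card_eq_zero_iff.mpr ⟨fun ⟨j, hj⟩ => by rcases hh j with e | e <;> simp_all⟩
  rw [empty hf, empty hg]

theorem exists_perm_of_sum_eq_of_zero_or_one (hf : ∀ j, f j = 0 ∨ f j = 1)
    (hg : ∀ j, g j = 0 ∨ g j = 1) (hsum : ∑ j, f j = ∑ j, g j) :
    ∃ σ : Equiv.Perm ι, ∀ j, f j = g (σ j) :=
  Equiv.Perm.exists_eq_comp_of_card_fiber_eq
    (card_fiber_eq_of_sum_eq_of_zero_or_one hf hg hsum)

theorem sum_mem_Icc_of_zero_or_one (hf : ∀ j, f j = 0 ∨ f j = 1) :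
    0 ≤ ∑ j, f j ∧ ∑ j, f j ≤ Fintype.card ι := by
  have hle : ∀ j, 0 ≤ f j ∧ f j ≤ 1 := fun j => by rcases hf j with h | h <;> simp [h]
  refine ⟨sum_nonneg fun j _ => (hle j).1, ?_⟩
  simpa using sum_le_sum fun j (_ : j ∈ univ) => (hle j).2

end ZeroOne

theorem EqvZ.rowSum_eq {d n : ℕ} {x y : Fin d → Fin n → ℤ} (h : EqvZ x y) (i : Fin d) :
    ∑ j, x i j = ∑ j, y i j := by
  obtain ⟨σ, hσ⟩ := h i
  simp_rw [hσ]
  exact Equiv.sum_comp σ (y i)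

theorem mulVec_rowSum_eq_smul {m d n : ℕ} (A : Matrix (Fin m) (Fin d) ℤ) (b : Fin m → ℤ)
    {y : Fin d → Fin n → ℤ} (hy : ∀ j, A.mulVec (fun i => y i j) = b) :
    A.mulVec (fun i => ∑ j, y i j) = (n : ℤ) • b := by
  have hcols : (fun i => ∑ j, y i j) = ∑ j, fun i => y i j := by
    ext i; simp [Finset.sum_apply]
  simp [hcols, Matrix.mulVec_sum, hy]

theorem stmt13_general (m d n : ℕ) (A : Matrix (Fin m) (Fin d) ℤ)
    (b : Fin m → ℤ)
    (S : Set (Fin d → ℤ))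
    (hSdef : S = {z | (∀ i, z i = 0 ∨ z i = 1) ∧ A.mulVec z = b})
    (hBT : ∀ w : Fin d → ℤ, (∀ i, 0 ≤ w i ∧ w i ≤ (n : ℤ)) →
      A.mulVec w = (n : ℤ) • b →
      ∃ ys : Fin n → Fin d → ℤ, (∀ k, ys k ∈ S) ∧ w = ∑ k, ys k) :
    {x : Fin d → Fin n → ℤ | (∀ i j, x i j = 0 ∨ x i j = 1) ∧
        ∃ y : Fin d → Fin n → ℤ, (∀ j, (fun i => y i j) ∈ S) ∧ EqvZ x y} =
      {x : Fin d → Fin n → ℤ | (∀ i j, x i j = 0 ∨ x i j = 1) ∧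
        A.mulVec (fun i => ∑ j, x i j) = (n : ℤ) • b} := by
  subst hSdef
  ext x
  refine and_congr_right fun h01 => ⟨fun ⟨y, hy, hxy⟩ => ?_, fun hx => ?_⟩
  · simp_rw [hxy.rowSum_eq]
    exact mulVec_rowSum_eq_smul A b fun j => (hy j).2
  · have hbound i := by simpa using sum_mem_Icc_of_zero_or_one (h01 i)
    obtain ⟨ys, hys, hsum⟩ := hBT _ hbound hx
    refine ⟨fun i j => ys j i, hys, fun i => exists_perm_of_sum_eq_of_zero_or_one (h01 i)
      (fun j => (hys j).1 i) ?_⟩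
    simpa [Finset.sum_apply] using congrFun hsum i

/-- For `S = {z ∈ {0,1}^d : Az = b}` with `A` totally unimodular,
`[Sⁿ] = {x ∈ {0,1}^{d×n} : A·(∑ⱼ xʲ) = n·b}`. The Baum–Trotter integer decomposition
property is assumed as the hypothesis `hBT`. -/
theorem stmt13 (m d n : ℕ) (hn : 0 < n) (A : Matrix (Fin m) (Fin d) ℤ)
    (hA : A.IsTotallyUnimodular) (b : Fin m → ℤ)
    (S : Set (Fin d → ℤ))
    (hSdef : S = {z | (∀ i, z i = 0 ∨ z i = 1) ∧ A.mulVec z = b})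
    (hBT : ∀ w : Fin d → ℤ, (∀ i, 0 ≤ w i ∧ w i ≤ (n : ℤ)) →
      A.mulVec w = (n : ℤ) • b →
      ∃ ys : Fin n → Fin d → ℤ, (∀ k, ys k ∈ S) ∧ w = ∑ k, ys k) :
    {x : Fin d → Fin n → ℤ | (∀ i j, x i j = 0 ∨ x i j = 1) ∧
        ∃ y : Fin d → Fin n → ℤ, (∀ j, (fun i => y i j) ∈ S) ∧ EqvZ x y} =
      {x : Fin d → Fin n → ℤ | (∀ i j, x i j = 0 ∨ x i j = 1) ∧
        A.mulVec (fun i => ∑ j, x i j) = (n : ℤ) • b} :=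
  stmt13_general m d n A b S hSdef hBT
end
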